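/- arXiv:1704.00303 — 3 statements merged into one kernel-verified Lean document; each statement's English description precedes it below -/
import Mathlib

section
/- Let $\mathcal{K}$ be a locally small category (objects in a universe $u$, hom-sets in a universe $v$). If $\mathcal{K}$ is concrete, i.e. admits a faithful functor into the category of $v$-small types, then for every object $A$ of $\mathcal{K}$ the class of generalized regular subobjects of $A$ is small: the quotient of the class of all morphisms with codomain $A$ by the relation $\simeq$ is $v$-small. -/
/-!
Send `f : X ⟶ A` to `range (F.map f) ⊆ F.obj A`, for a faithful `F : K ⥤ Type v`. Arrows with the
same image equalize the same pairs: by faithfulness, `g ≫ u = g ≫ v` can be checked on elements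
`F.map g x`, and each of these is some `F.map f y`. Hence the quotient is covered by a subset of
the `v`-small type `Set (F.obj A)`.
-/

universe v u

open CategoryTheory

theorem small_quot_of_ker_le.{w, w₁, w₂} {α : Type w₁} {β : Type w₂} [Small.{w} β]
    (r : α → α → Prop) (φ : α → β) (h : ∀ a b, φ a = φ b → r a b) : Small.{w} (Quot r) := by
  refine small_of_surjective (f := fun b : Set.range φ => Quot.mk r b.2.choose) ?_
  rintro ⟨a⟩
  exact ⟨⟨φ a, a, rfl⟩, Quot.sound (h _ _ (⟨a, rfl⟩ : φ a ∈ Set.range φ).choose_spec)⟩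

theorem comp_eq_comp_of_range_map_subset.{w, v₁, u₁} {C : Type u₁} [Category.{v₁} C]
    {F : C ⥤ Type w} [F.Faithful] {X Y A B : C} {f : X ⟶ A} {g : Y ⟶ A}
    (hgf : Set.range (F.map g) ⊆ Set.range (F.map f)) {u v : A ⟶ B} (huv : f ≫ u = f ≫ v) :
    g ≫ u = g ≫ v := by
  refine F.map_injective ?_
  ext x
  obtain ⟨y, hy⟩ := hgf ⟨x, rfl⟩
  have hFuv : F.map (f ≫ u) y = F.map (f ≫ v) y := by rw [huv]
  simp only [F.map_comp, types_comp_apply, hy] at hFuv ⊢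
  exact hFuv

theorem freyd_condition {K : Type u} [Category.{v} K]
    (hconcrete : ∃ F : K ⥤ Type v, F.Faithful) (A : K) :
    Small.{v} (Quot (fun (f g : Σ X : K, X ⟶ A) =>
      ∀ (B : K) (u v : A ⟶ B), (f.2 ≫ u = f.2 ≫ v) ↔ (g.2 ≫ u = g.2 ≫ v))) := by
  obtain ⟨F, _⟩ := hconcrete
  exact small_quot_of_ker_le _ (fun f => Set.range (F.map f.2)) fun f g hfg _ _ _ =>
    ⟨comp_eq_comp_of_range_map_subset hfg.ge, comp_eq_comp_of_range_map_subset hfg.le⟩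
end

section
/- Let $\mathcal{K}$ be a locally small category with zero morphisms, and let $X$ be an object of $\mathcal{K}$. Suppose that for every ordinal $\alpha$ we are given objects $Y_\alpha$, $F_\alpha$ and morphisms $u_\alpha : Y_\alpha \to X$ and $v_\alpha : X \to F_\alpha$ such that $v_\alpha \circ u_\alpha = 0$ for every $\alpha$, and $v_\alpha \circ u_\beta \neq 0$ whenever $\alpha < \beta$. Then for all $\alpha < \beta$ the morphisms $v_\alpha$ and $v_\beta$ are not $\simeq$-equivalent as generalized regular quotients of $X$; consequently the class $Q(\mathcal{K}/X)$ of generalized regular quotients of $X$ is not small, and $\mathcal{K}$ is not concrete. -/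
/-!
If `u β ≫ v β = 0` but `u β ≫ v α ≠ 0`, then the generalized elements `u β` and `0` of `X` are
identified by `v β` and not by `v α`, so `v α ≄ v β`. Hence `α ↦ [v α]` embeds the ordinals into
`Q(K/X)`, which therefore is not small. A faithful `G : K ⥤ Type v` would make it small: the class
of `f` is determined by the kernel relation of `G.map f` on the set `G.obj X`.
-/

universe v u

open CategoryTheory CategoryTheory.Limits

universe w

namespace CategoryTheory

variable {K : Type u} [Category.{v} K]

/-- The relation `f ≃ g`. -/
def SameKernelPair {A Z Z' : K} (f : A ⟶ Z) (g : A ⟶ Z') : Prop :=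
  ∀ (B : K) (s t : B ⟶ A), s ≫ f = t ≫ f ↔ s ≫ g = t ≫ g

/-- The class `Q(K/A)` of generalized regular quotients of `A`. -/
abbrev GenRegQuot (A : K) : Type _ :=
  Quot fun f g : Σ Z : K, A ⟶ Z => SameKernelPair f.2 g.2

theorem sameKernelPair_equivalence (A : K) :
    _root_.Equivalence fun f g : Σ Z : K, A ⟶ Z => SameKernelPair f.2 g.2 where
  refl _ _ _ _ := Iff.rfl
  symm h B s t := (h B s t).symm
  trans hfg hgh B s t := (hfg B s t).trans (hgh B s t)

theorem sameKernelPair_of_mk_eq {A : K} {f g : Σ Z : K, A ⟶ Z}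
    (h : (Quot.mk _ f : GenRegQuot A) = Quot.mk _ g) : SameKernelPair f.2 g.2 :=
  (sameKernelPair_equivalence A).eqvGen_iff.mp (Quot.eq.mp h)

theorem not_sameKernelPair_of_comp_ne_zero_of_comp_eq_zero [HasZeroMorphisms K]
    {W A Z Z' : K} {f : A ⟶ Z} {g : A ⟶ Z'} {w : W ⟶ A} (hf : w ≫ f ≠ 0) (hg : w ≫ g = 0) :
    ¬ SameKernelPair f g := fun h =>
  hf <| by simpa using (h W w 0).mpr (by simpa using hg)

theorem injective_mk_of_not_sameKernelPair {ι : Type*} [LinearOrder ι] {A : K} {F : ι → K}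
    (v : ∀ i, A ⟶ F i) (hv : ∀ i j, i < j → ¬ SameKernelPair (v i) (v j)) :
    Function.Injective fun i => (Quot.mk _ ⟨F i, v i⟩ : GenRegQuot A) := by
  intro i j hij
  by_contra hne
  rcases Ne.lt_or_gt hne with hlt | hlt
  · exact hv i j hlt (sameKernelPair_of_mk_eq hij)
  · exact hv j i hlt (sameKernelPair_of_mk_eq hij.symm)

theorem not_small_genRegQuot_of_ordinal_family {A : K} {F : Ordinal.{w} → K}
    (v : ∀ α, A ⟶ F α) (hv : ∀ α β, α < β → ¬ SameKernelPair (v α) (v β)) :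
    ¬ Small.{w} (GenRegQuot A) := by
  intro
  exact not_small_ordinal.{w} (small_of_injective (injective_mk_of_not_sameKernelPair v hv))

theorem Functor.comp_eq_comp_iff_of_faithful (G : K ⥤ Type w) [G.Faithful] {B A Z : K}
    (s t : B ⟶ A) (f : A ⟶ Z) :
    s ≫ f = t ≫ f ↔ ∀ x, G.map f (G.map s x) = G.map f (G.map t x) := by
  rw [← G.map_injective.eq_iff, G.map_comp, G.map_comp]
  exact ⟨fun h x => ConcreteCategory.congr_hom h x, fun h => ConcreteCategory.hom_ext _ _ h⟩

theorem sameKernelPair_of_faithful (G : K ⥤ Type w) [G.Faithful] {A Z Z' : K}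
    {f : A ⟶ Z} {g : A ⟶ Z'} (h : ∀ x y, G.map f x = G.map f y ↔ G.map g x = G.map g y) :
    SameKernelPair f g := fun B s t => by
  simp only [G.comp_eq_comp_iff_of_faithful, h]

theorem small_genRegQuot_of_faithful (G : K ⥤ Type w) [G.Faithful] (A : K) :
    Small.{w} (GenRegQuot A) := by
  let ker : (Σ Z : K, A ⟶ Z) → G.obj A → G.obj A → Prop := fun f x y => G.map f.2 x = G.map f.2 y
  refine small_of_surjective (f := fun ρ : Set.range ker => Quot.mk _ (Set.rangeSplitting ker ρ))
    fun q => ?_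
  induction q using Quot.ind with | mk f => ?_
  let ρ : Set.range ker := ⟨ker f, f, rfl⟩
  have same_ker : ker (Set.rangeSplitting ker ρ) = ker f := Set.apply_rangeSplitting ker ρ
  exact ⟨ρ, Quot.sound <| sameKernelPair_of_faithful G fun x y =>
    iff_of_eq (congr_fun₂ same_ker x y)⟩

end CategoryTheory

theorem not_concrete_of_ordinal_family
    {K : Type u} [Category.{v} K] [HasZeroMorphisms K] (X : K)
    (Y F : Ordinal.{v} → K)
    (u : ∀ α, Y α ⟶ X) (v : ∀ α, X ⟶ F α)
    (h0 : ∀ α, u α ≫ v α = 0)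
    (h1 : ∀ α β, α < β → u β ≫ v α ≠ 0) :
    (∀ α β, α < β →
      ¬ (∀ (B : K) (s t : B ⟶ X), (s ≫ v α = t ≫ v α) ↔ (s ≫ v β = t ≫ v β))) ∧
    ¬ Small.{v} (Quot (fun (f g : Σ Z : K, X ⟶ Z) =>
        ∀ (B : K) (s t : B ⟶ X), (s ≫ f.2 = t ≫ f.2) ↔ (s ≫ g.2 = t ≫ g.2))) ∧
    (∀ G : K ⥤ Type v, ¬ G.Faithful) := by
  have hv : ∀ α β, α < β → ¬ SameKernelPair (v α) (v β) := fun α β hαβ =>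
    not_sameKernelPair_of_comp_ne_zero_of_comp_eq_zero (h1 α β hαβ) (h0 β)
  have not_small := not_small_genRegQuot_of_ordinal_family v hv
  exact ⟨hv, not_small, fun G _ => not_small (small_genRegQuot_of_faithful G X)⟩
end

section
/- Let $\mathcal{M}$ be a model category and let $\mathcal{W}$ be a full subcategory of $\mathcal{M}$ whose inclusion $U : \mathcal{W} \to \mathcal{M}$ admits both a left adjoint and a right adjoint, and equip $\mathcal{W}$ with the model structure in which a morphism $\varphi$ is a weak equivalence (respectively cofibration, fibration) if and only if $U\varphi$ is a weak equivalence (respectively cofibration, fibration) in $\mathcal{M}$. Then the induced functor $\mathrm{HO}(\mathcal{W}) \to \mathrm{HO}(\mathcal{M})$ between the localizations at the weak equivalences is faithful. -/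
/-!
Let `L` be the reflector, `L ⊣ U`. Since `U` preserves fibrations, `L` preserves trivial
cofibrations, so by Ken Brown's lemma `L` sends weak equivalences between cofibrant objects
to weak equivalences. As `HO(M)` is also the localization of the full subcategory of
cofibrant objects, `L` descends to `R : HO(M) ⥤ HO(W)`. Now `U` preserves cofibrant objects
(it preserves the initial object and cofibrations) and `U ⋙ L ≅ 𝟭 W` because `U` is fully
faithful, so `HO(U) ⋙ R` agrees with the identity on the cofibrant objects of `W`, which
again localize to `HO(W)`. Hence `HO(U) ⋙ R ≅ 𝟭`, and `HO(U)` is faithful.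
-/

universe v u v' u'

open CategoryTheory CategoryTheory.Limits

/-- `f` is a retract of `g`. -/
def IsRetractOf {M : Type u} [Category.{v} M] {X Y X' Y' : M}
    (f : X ⟶ Y) (g : X' ⟶ Y') : Prop :=
  ∃ (i : X ⟶ X') (r : X' ⟶ X) (i' : Y ⟶ Y') (r' : Y' ⟶ Y),
    i ≫ r = 𝟙 X ∧ i' ≫ r' = 𝟙 Y ∧ i ≫ g = f ≫ i' ∧ g ≫ r' = r ≫ f

/-- A (Quillen) model structure on a category: three classes of maps
(weak equivalences, cofibrations, fibrations) satisfying the usual axioms,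
on a finitely bicomplete category. -/
structure ModelStructure (M : Type u) [Category.{v} M] : Type (max u (v + 1)) where
  [hasFiniteLimits : HasFiniteLimits M]
  [hasFiniteColimits : HasFiniteColimits M]
  weq : MorphismProperty M
  cof : MorphismProperty M
  fib : MorphismProperty M
  weq_comp : ∀ {X Y Z : M} (f : X ⟶ Y) (g : Y ⟶ Z), weq f → weq g → weq (f ≫ g)
  weq_cancel_left : ∀ {X Y Z : M} (f : X ⟶ Y) (g : Y ⟶ Z), weq g → weq (f ≫ g) → weq f
  weq_cancel_right : ∀ {X Y Z : M} (f : X ⟶ Y) (g : Y ⟶ Z), weq f → weq (f ≫ g) → weq g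
  weq_retract : ∀ {X Y X' Y' : M} (f : X ⟶ Y) (g : X' ⟶ Y'),
    IsRetractOf f g → weq g → weq f
  cof_retract : ∀ {X Y X' Y' : M} (f : X ⟶ Y) (g : X' ⟶ Y'),
    IsRetractOf f g → cof g → cof f
  fib_retract : ∀ {X Y X' Y' : M} (f : X ⟶ Y) (g : X' ⟶ Y'),
    IsRetractOf f g → fib g → fib f
  lift_cof_trivFib : ∀ {A B X Y : M} (i : A ⟶ B) (p : X ⟶ Y),
    cof i → weq p → fib p → HasLiftingProperty i p
  lift_trivCof_fib : ∀ {A B X Y : M} (i : A ⟶ B) (p : X ⟶ Y),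
    cof i → weq i → fib p → HasLiftingProperty i p
  factor_cof_trivFib : ∀ {X Y : M} (f : X ⟶ Y),
    ∃ (Z : M) (i : X ⟶ Z) (p : Z ⟶ Y), cof i ∧ weq p ∧ fib p ∧ i ≫ p = f
  factor_trivCof_fib : ∀ {X Y : M} (f : X ⟶ Y),
    ∃ (Z : M) (i : X ⟶ Z) (p : Z ⟶ Y), cof i ∧ weq i ∧ fib p ∧ i ≫ p = f

namespace ModelStructure

open HomotopicalAlgebra

variable {M : Type u} [Category.{v} M]

lemma isRetractOf_of_retractArrow {X Y X' Y' : M} {f : X ⟶ Y} {g : X' ⟶ Y'}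
    (h : RetractArrow f g) : IsRetractOf f g :=
  ⟨h.i.left, h.r.left, h.i.right, h.r.right, h.retract_left, h.retract_right, h.i_w, h.r_w.symm⟩

abbrev toModelCategory (mM : ModelStructure M) : ModelCategory M where
  categoryWithFibrations := ⟨mM.fib⟩
  categoryWithCofibrations := ⟨mM.cof⟩
  categoryWithWeakEquivalences := ⟨mM.weq⟩
  cm1a := mM.hasFiniteLimits
  cm1b := mM.hasFiniteColimits
  cm2 :=
    { comp_mem := mM.weq_comp
      of_postcomp := mM.weq_cancel_left
      of_precomp := mM.weq_cancel_right }
  cm3a := ⟨fun h => mM.weq_retract _ _ (isRetractOf_of_retractArrow h)⟩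
  cm3b := ⟨fun h => mM.fib_retract _ _ (isRetractOf_of_retractArrow h)⟩
  cm3c := ⟨fun h => mM.cof_retract _ _ (isRetractOf_of_retractArrow h)⟩
  cm4a i p hi hi' hp := mM.lift_trivCof_fib i p hi.mem hi'.mem hp.mem
  cm4b i p hi hp hp' := mM.lift_cof_trivFib i p hi.mem hp'.mem hp.mem
  cm5a := ⟨fun f => by
    obtain ⟨Z, i, p, hi, hi', hp, rfl⟩ := mM.factor_trivCof_fib f
    exact ⟨{ Z, i, p, hi := ⟨hi, hi'⟩, hp }⟩⟩
  cm5b := ⟨fun f => by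
    obtain ⟨Z, i, p, hi, hp', hp, rfl⟩ := mM.factor_cof_trivFib f
    exact ⟨{ Z, i, p, hi, hp := ⟨hp, hp'⟩ }⟩⟩

end ModelStructure

namespace HomotopicalAlgebra

open MorphismProperty

variable {C : Type*} [Category* C] [ModelCategory C] {C' : Type*} [Category* C'] [ModelCategory C']

theorem isInvertedBy_weakEquivalences_cofibrantObject {D : Type*} [Category* D] {F : C ⥤ D}
    (hF : (trivialCofibrations C).IsInvertedBy F) :
    (weakEquivalences (CofibrantObject C)).IsInvertedBy (CofibrantObject.ι ⋙ F) := by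
  intro X Y f hf
  rw [← weakEquivalence_iff, weakEquivalence_iff_of_objectProperty] at hf
  -- Ken Brown: `f = i ≫ p` with `i` a trivial cofibration and `p` a retraction of the
  -- trivial cofibration `s`.
  obtain ⟨h⟩ : Nonempty (CofibrantBrownFactorization f.hom) := inferInstance
  have hi : IsIso (F.map h.i) := hF _ ⟨h.hi, (weakEquivalence_iff _).1 inferInstance⟩
  have hs : IsIso (F.map h.s) :=
    hF _ ⟨(cofibration_iff _).1 inferInstance, (weakEquivalence_iff _).1 inferInstance⟩
  have hsp : IsIso (F.map h.s ≫ F.map h.p) := by rw [← F.map_comp, h.s_p]; infer_instance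
  have hp : IsIso (F.map h.p) := IsIso.of_isIso_comp_left (F.map h.s) _
  have hfac : (CofibrantObject.ι ⋙ F).map f = F.map h.i ≫ F.map h.p := by
    simp [← F.map_comp, h.fac]
  rw [hfac]
  infer_instance

lemma trivialCofibrations_le_inverseImage_of_adjunction {L : C ⥤ C'} {U : C' ⥤ C}
    (adj : L ⊣ U) (hU : fibrations C' ≤ (fibrations C).inverseImage U) :
    trivialCofibrations C ≤ (trivialCofibrations C').inverseImage L := by
  intro A B i hi
  rw [inverseImage_iff, ← llp_eq_of_wfs (trivialCofibrations C') (fibrations C')]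
  intro X Y p hp
  rw [adj.hasLiftingProperty_iff]
  exact hasLiftingProperty_of_wfs _ _ hi (hU _ hp)

lemma isCofibrant_obj_of_preservesInitial (U : C' ⥤ C)
    [PreservesColimit (Functor.empty.{0} C') U]
    (hU : cofibrations C' ≤ (cofibrations C).inverseImage U) (X : C') [IsCofibrant X] :
    IsCofibrant (U.obj X) := by
  rw [isCofibrant_iff_of_isInitial (U.map (initial.to X))
    (isColimitOfHasInitialOfPreservesColimit U), cofibration_iff]
  exact hU _ (mem_cofibrations _)

theorem faithful_of_lifting_of_reflective {L : C ⥤ C'} {U : C' ⥤ C} (adj : L ⊣ U)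
    [U.Full] [U.Faithful] (hcof : ∀ (X : C') [IsCofibrant X], IsCofibrant (U.obj X))
    (hfib : fibrations C' ≤ (fibrations C).inverseImage U)
    {H H' : Type*} [Category* H] [Category* H']
    (LC : C ⥤ H) [LC.IsLocalization (weakEquivalences C)]
    (LC' : C' ⥤ H') [LC'.IsLocalization (weakEquivalences C')]
    (G : H' ⥤ H) [hG : Localization.Lifting LC' (weakEquivalences C') (U ⋙ LC) G] :
    G.Faithful := by
  let F : CofibrantObject C ⥤ H' := CofibrantObject.ι ⋙ L ⋙ LC'
  have hF : (weakEquivalences (CofibrantObject C)).IsInvertedBy F :=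
    isInvertedBy_weakEquivalences_cofibrantObject fun _ _ i hi =>
      Localization.inverts LC' (weakEquivalences C') _
        (trivialCofibrations_le_inverseImage_of_adjunction adj hfib _ hi).2
  let R : H ⥤ H' := Localization.lift F hF (CofibrantObject.ι ⋙ LC)
  let V : CofibrantObject C' ⥤ CofibrantObject C :=
    ObjectProperty.lift _ (CofibrantObject.ι ⋙ U) fun X => @hcof X.obj X.property
  let e : (CofibrantObject.ι ⋙ LC') ⋙ G ⋙ R ≅ (CofibrantObject.ι ⋙ LC') ⋙ 𝟭 H' :=
    Functor.isoWhiskerLeft CofibrantObject.ι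
        (Functor.isoWhiskerRight
          (Localization.Lifting.iso LC' (weakEquivalences C') (U ⋙ LC) G) R) ≪≫
      Functor.isoWhiskerLeft V
        (Localization.Lifting.iso (CofibrantObject.ι ⋙ LC) (weakEquivalences _) F R) ≪≫
      Functor.isoWhiskerLeft CofibrantObject.ι (Functor.isoWhiskerRight (asIso adj.counit) LC')
  exact Functor.Faithful.of_comp_iso
    (Localization.liftNatIso (CofibrantObject.ι ⋙ LC') (weakEquivalences _) _ _ (G ⋙ R) (𝟭 H') e)

end HomotopicalAlgebra

theorem piercing_model_subcategory_induces_faithful_functor_on_homotopy_categories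
    {M : Type u} [Category.{v} M] (mM : ModelStructure M)
    {W : Type u'} [Category.{v'} W]
    (U : W ⥤ M) (hfull : U.Full) (hfaithful : U.Faithful)
    (hreflective : U.IsRightAdjoint) (hcoreflective : U.IsLeftAdjoint)
    (mW : ModelStructure W)
    (hweq : mW.weq = mM.weq.inverseImage U)
    (hcof : mW.cof = mM.cof.inverseImage U)
    (hfib : mW.fib = mM.fib.inverseImage U) :
    (Localization.lift (U ⋙ mM.weq.Q)
      (show mW.weq.IsInvertedBy (U ⋙ mM.weq.Q) from fun _ _ f hf =>
        Localization.inverts mM.weq.Q mM.weq (U.map f)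
          (by rw [hweq] at hf; exact hf))
      mW.weq.Q).Faithful := by
  let instM : HomotopicalAlgebra.ModelCategory M := mM.toModelCategory
  let instW : HomotopicalAlgebra.ModelCategory W := mW.toModelCategory
  have : mM.weq.Q.IsLocalization (HomotopicalAlgebra.weakEquivalences M) :=
    inferInstanceAs (mM.weq.Q.IsLocalization mM.weq)
  have : mW.weq.Q.IsLocalization (HomotopicalAlgebra.weakEquivalences W) :=
    inferInstanceAs (mW.weq.Q.IsLocalization mW.weq)
  exact HomotopicalAlgebra.faithful_of_lifting_of_reflective (Adjunction.ofIsRightAdjoint U)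
    (HomotopicalAlgebra.isCofibrant_obj_of_preservesInitial U hcof.le) hfib.le
    mM.weq.Q mW.weq.Q _ (hG := Localization.liftingLift _ _ _)
end
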